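/- arXiv:1911.05788 — 8 statements merged into one kernel-verified Lean document; each statement's English description precedes it below -/
import Mathlib

section
/- Consider a heterogeneous BNPG on the complete graph with n players and let k be an integer with 0 < k < n. Define I⁺(k) = {i : c_i < Δg_i(k)} and I⁻(k) = {i : c_i > Δg_i(k−1)}. Suppose that there is no player i with Δg_i(k−1) < c_i < Δg_i(k). Then the game has a non-trivial PSNE with exactly k investing players if and only if |I⁺(k)| ≤ k, |I⁻(k)| ≤ n − k, and |V \ (I⁺(k) ∪ I⁻(k))| ≥ k − |I⁺(k)|. -/
/-- Finite difference `Δg(m) = g(m+1) − g(m)`. -/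
def Δg (g : ℕ → ℝ) (m : ℕ) : ℝ := g (m + 1) - g m

/-- Number of investing neighbors of player `i` under profile `x` in graph `G`. -/
noncomputable def nInv {V : Type*} (G : SimpleGraph V) (x : V → Bool) (i : V) : ℕ :=
  {j | G.Adj i j ∧ x j = true}.ncard

/-- Pure-strategy Nash equilibrium of the BNPG on `G` with externalities `g` and costs `c`. -/
def IsPSNE {V : Type*} (G : SimpleGraph V) (g : V → ℕ → ℝ) (c : V → ℝ)
    (x : V → Bool) : Prop :=
  ∀ i, (x i = true → c i ≤ Δg (g i) (nInv G x i)) ∧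
       (x i = false → Δg (g i) (nInv G x i) ≤ c i)

/-!
On the complete graph every player sees all investors but himself, so in a profile with exactly
`k` investors each investor faces `k - 1` investing neighbours and each non-investor faces `k`.
Such a profile is therefore an equilibrium iff its investor set `S` satisfies `I⁺(k) ⊆ S` and
`S ∩ I⁻(k) = ∅`. The gap hypothesis makes `I⁺(k)` and `I⁻(k)` disjoint, and the three cardinality
conditions say exactly that a set of size `k` fits between `I⁺(k)` and the complement of `I⁻(k)`.
-/

namespace Set

variable {α : Type*}

theorem exists_subset_subset_compl_ncard_eq_iff [Finite α] {A B : Set α} (hAB : Disjoint A B)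
    (k : ℕ) :
    (∃ S, A ⊆ S ∧ S ⊆ Bᶜ ∧ S.ncard = k) ↔
      A.ncard ≤ k ∧ B.ncard ≤ Nat.card α - k ∧ k - A.ncard ≤ (univ \ (A ∪ B)).ncard := by
  constructor
  · rintro ⟨S, hAS, hSB, rfl⟩
    have hBS : B ⊆ Sᶜ := subset_compl_comm.mp hSB
    have hSA : S \ A ⊆ univ \ (A ∪ B) := fun i ⟨hiS, hiA⟩ =>
      ⟨mem_univ i, fun hiAB => hiAB.elim hiA (hSB hiS)⟩
    refine ⟨ncard_le_ncard hAS, ?_, ?_⟩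
    · exact (ncard_compl S).symm ▸ ncard_le_ncard hBS
    · exact (ncard_sdiff hAS).symm ▸ ncard_le_ncard hSA
  · rintro ⟨hA, -, hrest⟩
    obtain ⟨T, hT, hTcard⟩ := exists_subset_card_eq hrest
    have hTA : Disjoint A T := disjoint_left.mpr fun i hiA hiT => (hT hiT).2 (Or.inl hiA)
    have hTB : T ⊆ Bᶜ := fun i hiT hiB => (hT hiT).2 (Or.inr hiB)
    refine ⟨A ∪ T, subset_union_left, union_subset hAB.subset_compl_right hTB, ?_⟩
    rw [ncard_union_eq hTA, hTcard]
    omega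

end Set

section CompleteGraph

variable {V : Type*}

theorem nInv_top (x : V → Bool) (i : V) :
    nInv (⊤ : SimpleGraph V) x i = ({j | x j = true} \ {i}).ncard := by
  unfold nInv
  congr 1
  ext j
  simp only [SimpleGraph.top_adj, Set.mem_ofPred_eq, Set.mem_sdiff, Set.mem_singleton_iff]
  exact ⟨fun ⟨hij, hj⟩ => ⟨hj, hij.symm⟩, fun ⟨hj, hji⟩ => ⟨Ne.symm hji, hj⟩⟩

theorem nInv_top_of_true {x : V → Bool} {i : V} (hi : x i = true) :
    nInv (⊤ : SimpleGraph V) x i = {j | x j = true}.ncard - 1 := by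
  rw [nInv_top, Set.ncard_sdiff_singleton_of_mem (s := {j | x j = true}) hi]

theorem nInv_top_of_false {x : V → Bool} {i : V} (hi : x i = false) :
    nInv (⊤ : SimpleGraph V) x i = {j | x j = true}.ncard := by
  rw [nInv_top, Set.sdiff_singleton_eq_self (by simp [hi])]

theorem isPSNE_top_iff {g : V → ℕ → ℝ} {c : V → ℝ} {x : V → Bool} {k : ℕ}
    (hk : {i | x i = true}.ncard = k) :
    IsPSNE ⊤ g c x ↔
      {i | c i < Δg (g i) k} ⊆ {i | x i = true} ∧
        {i | x i = true} ⊆ {i | Δg (g i) (k - 1) < c i}ᶜ := by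
  simp only [IsPSNE, Set.subset_def, ← forall_and]
  refine forall_congr' fun i => ?_
  cases hi : x i
  · simp [nInv_top_of_false hi, hk, hi]
  · simp [nInv_top_of_true hi, hk, hi]

theorem exists_isPSNE_top_ncard_eq_iff (g : V → ℕ → ℝ) (c : V → ℝ) (k : ℕ) :
    (∃ x : V → Bool, IsPSNE ⊤ g c x ∧ {i | x i = true}.ncard = k) ↔
      ∃ S : Set V, {i | c i < Δg (g i) k} ⊆ S ∧ S ⊆ {i | Δg (g i) (k - 1) < c i}ᶜ ∧
        S.ncard = k := by
  classical
  constructor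
  · rintro ⟨x, hx, hk⟩
    obtain ⟨hIS, hSI⟩ := (isPSNE_top_iff hk).mp hx
    exact ⟨_, hIS, hSI, hk⟩
  · rintro ⟨S, hIS, hSI, hk⟩
    let x : V → Bool := fun i => decide (i ∈ S)
    have hxS : {i | x i = true} = S := by simp [x]
    rw [← hxS] at hIS hSI hk
    exact ⟨x, (isPSNE_top_iff hk).mpr ⟨hIS, hSI⟩, hk⟩

end CompleteGraph

theorem stmt1_general (n k : ℕ)
    (g : Fin n → ℕ → ℝ) (c : Fin n → ℝ)
    (hno : ∀ i : Fin n, ¬ (Δg (g i) (k - 1) < c i ∧ c i < Δg (g i) k)) :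
    (∃ x : Fin n → Bool,
        IsPSNE (⊤ : SimpleGraph (Fin n)) g c x ∧ {i | x i = true}.ncard = k) ↔
      ({i : Fin n | c i < Δg (g i) k}.ncard ≤ k ∧
       {i : Fin n | Δg (g i) (k - 1) < c i}.ncard ≤ n - k ∧
       k - {i : Fin n | c i < Δg (g i) k}.ncard ≤
         (Set.univ \ ({i : Fin n | c i < Δg (g i) k} ∪
            {i : Fin n | Δg (g i) (k - 1) < c i})).ncard) := by
  have hdisj : Disjoint {i | c i < Δg (g i) k} {i | Δg (g i) (k - 1) < c i} :=
    Set.disjoint_left.mpr fun i hplus hminus => hno i ⟨hminus, hplus⟩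
  rw [exists_isPSNE_top_ncard_eq_iff, Set.exists_subset_subset_compl_ncard_eq_iff hdisj,
    Nat.card_fin]

/-- heterogeneous BNPG on the complete graph on `n` players, `0 < k < n`,
with no player `i` satisfying `Δg_i(k−1) < c_i < Δg_i(k)`.  The game has a (non-trivial)
PSNE with exactly `k` investing players iff `|I⁺(k)| ≤ k`, `|I⁻(k)| ≤ n − k`, and
`|V \ (I⁺(k) ∪ I⁻(k))| ≥ k − |I⁺(k)|`. -/
theorem stmt1 (n k : ℕ) (hk0 : 0 < k) (hkn : k < n)
    (g : Fin n → ℕ → ℝ) (hmono : ∀ i, Monotone (g i)) (c : Fin n → ℝ)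
    (hno : ∀ i : Fin n, ¬ (Δg (g i) (k - 1) < c i ∧ c i < Δg (g i) k)) :
    (∃ x : Fin n → Bool,
        IsPSNE (⊤ : SimpleGraph (Fin n)) g c x ∧ {i | x i = true}.ncard = k) ↔
      ({i : Fin n | c i < Δg (g i) k}.ncard ≤ k ∧
       {i : Fin n | Δg (g i) (k - 1) < c i}.ncard ≤ n - k ∧
       k - {i : Fin n | c i < Δg (g i) k}.ncard ≤
         (Set.univ \ ({i : Fin n | c i < Δg (g i) k} ∪
            {i : Fin n | Δg (g i) (k - 1) < c i})).ncard) :=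
  stmt1_general n k g c hno
end

section
/- Every homogeneous BNPG on the complete graph with n players has a pure-strategy Nash equilibrium. -/
open Finset

theorem exists_finset_forall_mem_le_and_forall_notMem_le
    {V : Type*} [Fintype V] [DecidableEq V] (c : V → ℝ) (f : ℕ → ℝ) :
    ∃ S : Finset V, (∀ i ∈ S, c i ≤ f (#S - 1)) ∧ ∀ i ∉ S, f #S ≤ c i := by
  let Q : Finset V → Prop := fun S =>
    (∀ i ∈ S, c i ≤ f (#S - 1)) ∧ ∀ i ∈ S, ∀ j ∉ S, c i ≤ c j
  obtain ⟨S, hS, hmax⟩ := (univ.filter Q).exists_max_image card ⟨∅, by simp [Q]⟩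
  obtain ⟨hcost, hlower⟩ := (mem_filter.mp hS).2
  refine ⟨S, hcost, fun j hj => ?_⟩
  by_contra! hlt
  obtain ⟨j₀, hj₀, hmin⟩ := (univ.filter (· ∉ S)).exists_min_image c ⟨j, by simpa using hj⟩
  have hj₀S : j₀ ∉ S := (mem_filter.mp hj₀).2
  have hcheapest : ∀ k ∉ S, c j₀ ≤ c k := fun k hk => hmin k (by simpa using hk)
  have hQ : Q (insert j₀ S) := by
    refine ⟨fun i hi => ?_, fun i hi k hk => ?_⟩
    · rw [card_insert_of_notMem hj₀S, Nat.add_sub_cancel]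
      have hj₀f : c j₀ ≤ f #S := (hcheapest j hj).trans hlt.le
      rcases mem_insert.mp hi with rfl | hi
      · exact hj₀f
      · exact (hlower i hi j₀ hj₀S).trans hj₀f
    · have hkS : k ∉ S := fun h => hk (mem_insert_of_mem h)
      rcases mem_insert.mp hi with rfl | hi
      · exact hcheapest k hkS
      · exact hlower i hi k hkS
  have hcard := hmax _ (mem_filter.mpr ⟨mem_univ _, hQ⟩)
  rw [card_insert_of_notMem hj₀S] at hcard
  omega

theorem nInv_top_decide_mem {V : Type*} [DecidableEq V] (S : Finset V) (i : V) :
    nInv ⊤ (fun j => decide (j ∈ S)) i = #(S.erase i) := by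
  rw [nInv, ← Set.ncard_coe_finset]
  congr 1
  ext j
  simp [and_comm, eq_comm]

theorem isPSNE_top_decide_mem {V : Type*} [DecidableEq V] (g : ℕ → ℝ) (c : V → ℝ)
    (S : Finset V) (hin : ∀ i ∈ S, c i ≤ Δg g (#S - 1)) (hout : ∀ i ∉ S, Δg g #S ≤ c i) :
    IsPSNE ⊤ (fun _ => g) c (fun j => decide (j ∈ S)) := by
  intro i
  rw [nInv_top_decide_mem]
  constructor
  · intro hi
    rw [decide_eq_true_iff] at hi
    rw [card_erase_of_mem hi]
    exact hin i hi
  · intro hi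
    rw [decide_eq_false_iff_not] at hi
    rw [erase_eq_of_notMem hi]
    exact hout i hi

theorem stmt2_general (n : ℕ) (g : ℕ → ℝ) (c : Fin n → ℝ) :
    ∃ x : Fin n → Bool, IsPSNE (⊤ : SimpleGraph (Fin n)) (fun _ => g) c x := by
  obtain ⟨S, hin, hout⟩ := exists_finset_forall_mem_le_and_forall_notMem_le c (Δg g)
  exact ⟨_, isPSNE_top_decide_mem g c S hin hout⟩

/-- every homogeneous BNPG on the complete graph on `n` players has a PSNE. -/
theorem stmt2 (n : ℕ) (g : ℕ → ℝ) (hmono : Monotone g) (c : Fin n → ℝ) :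
    ∃ x : Fin n → Bool, IsPSNE (⊤ : SimpleGraph (Fin n)) (fun _ => g) c x :=
  stmt2_general n g c
end

section
/- Consider a fully homogeneous BNPG on a finite simple graph G with common externality function g such that Δg is strictly increasing (g strictly convex) and common cost c, and let x be a non-trivial PSNE with set of investing players S (so ∅ ≠ S ⊊ V). Then the set {m ∈ ℕ : c ≤ Δg(m)} is nonempty; letting k be its least element, every player i ∈ S has at least k neighbors in S, i.e., the subgraph of G induced on S has minimum degree at least k. -/
theorem stmt9_general {V : Type*} (G : SimpleGraph V)
    (g : ℕ → ℝ) (c : ℝ)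
    (x : V → Bool) (hx : IsPSNE G (fun _ => g) (fun _ => c) x)
    (hne : {i | x i = true}.Nonempty) :
    {m : ℕ | c ≤ Δg g m}.Nonempty ∧
    ∀ i, x i = true →
      sInf {m : ℕ | c ≤ Δg g m} ≤ {j | G.Adj i j ∧ x j = true}.ncard := by
  have invests_mem : ∀ i, x i = true → nInv G x i ∈ {m : ℕ | c ≤ Δg g m} :=
    fun i hi => (hx i).1 hi
  obtain ⟨i₀, hi₀⟩ := hne
  exact ⟨⟨_, invests_mem i₀ hi₀⟩, fun i hi => Nat.sInf_le (invests_mem i hi)⟩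

/-- fully homogeneous BNPG with strictly convex `g`; if `x` is a non-trivial
PSNE with investing set `S = {i | x i = true}` (so `∅ ≠ S ⊊ V`), then
`{m : c ≤ Δg(m)}` is nonempty, and with `k` its least element every player of `S` has at
least `k` neighbors in `S`. -/
theorem stmt9 {V : Type*} [Fintype V] (G : SimpleGraph V)
    (g : ℕ → ℝ) (hmono : Monotone g) (hconv : StrictMono (Δg g)) (c : ℝ)
    (x : V → Bool) (hx : IsPSNE G (fun _ => g) (fun _ => c) x)
    (hne : {i | x i = true}.Nonempty) (hproper : {i | x i = true} ≠ Set.univ) :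
    {m : ℕ | c ≤ Δg g m}.Nonempty ∧
    ∀ i, x i = true →
      sInf {m : ℕ | c ≤ Δg g m} ≤ {j | G.Adj i j ∧ x j = true}.ncard :=
  stmt9_general G g c x hx hne
end

section
/- Consider a fully homogeneous BNPG on a finite simple graph G with common externality function g such that Δg is strictly increasing (g strictly convex) and common cost c. If the game has a non-trivial PSNE, then {m ∈ ℕ : c ≤ Δg(m)} is nonempty and, letting k be its least element, G has a nonempty set S of vertices such that every vertex of S has at least k neighbors in S (i.e., G has a nonempty k-core). -/
/-! Every investor `i` of an equilibrium has `c ≤ Δg (nᵢ)`, so `nᵢ` is at least the least such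
threshold `k`; hence the investors of a non-trivial equilibrium form a nonempty set in which
every vertex has at least `k` neighbours. -/

namespace IsPSNE

variable {V : Type*} {G : SimpleGraph V} {g : ℕ → ℝ} {c : ℝ} {x : V → Bool}

theorem cost_le_of_invests (hx : IsPSNE G (fun _ => g) (fun _ => c) x) {i : V}
    (hi : x i = true) : c ≤ Δg g (nInv G x i) :=
  (hx i).1 hi

theorem sInf_le_nInv_of_invests (hx : IsPSNE G (fun _ => g) (fun _ => c) x) {i : V}
    (hi : x i = true) : sInf {m : ℕ | c ≤ Δg g m} ≤ nInv G x i :=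
  Nat.sInf_le (hx.cost_le_of_invests hi)

end IsPSNE

theorem stmt10_general {V : Type*} (G : SimpleGraph V)
    (g : ℕ → ℝ) (c : ℝ)
    (hex : ∃ x : V → Bool, IsPSNE G (fun _ => g) (fun _ => c) x ∧
      {i | x i = true}.Nonempty ∧ {i | x i = true} ≠ Set.univ) :
    {m : ℕ | c ≤ Δg g m}.Nonempty ∧
    ∃ S : Set V, S.Nonempty ∧
      ∀ i ∈ S, sInf {m : ℕ | c ≤ Δg g m} ≤ {j | G.Adj i j ∧ j ∈ S}.ncard := by
  obtain ⟨x, hx, ⟨i₀, hi₀⟩, -⟩ := hex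
  exact ⟨⟨_, hx.cost_le_of_invests hi₀⟩, {i | x i = true}, ⟨i₀, hi₀⟩,
    fun i hi => hx.sInf_le_nInv_of_invests hi⟩

/-- fully homogeneous BNPG with strictly convex `g`; if the game has a
non-trivial PSNE, then `{m : c ≤ Δg(m)}` is nonempty and, with `k` its least element,
`G` has a nonempty set `S` of vertices each having at least `k` neighbors in `S`
(a nonempty `k`-core). -/
theorem stmt10 {V : Type*} [Fintype V] (G : SimpleGraph V)
    (g : ℕ → ℝ) (hmono : Monotone g) (hconv : StrictMono (Δg g)) (c : ℝ)
    (hex : ∃ x : V → Bool, IsPSNE G (fun _ => g) (fun _ => c) x ∧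
      {i | x i = true}.Nonempty ∧ {i | x i = true} ≠ Set.univ) :
    {m : ℕ | c ≤ Δg g m}.Nonempty ∧
    ∃ S : Set V, S.Nonempty ∧
      ∀ i ∈ S, sInf {m : ℕ | c ≤ Δg g m} ≤ {j | G.Adj i j ∧ j ∈ S}.ncard :=
  stmt10_general G g c hex
end

section
/- Consider a fully homogeneous BNPG on a finite simple graph G with common externality function g such that Δg is strictly increasing (g strictly convex) and common cost c. Suppose {m ∈ ℕ : c ≤ Δg(m)} is nonempty with least element k, and that k ≥ 1. Let S be a nonempty set of vertices that is maximal with respect to the property that every vertex of S has at least k neighbors in S (i.e., S is the nonempty k-core of G). Then the action profile in which exactly the players in S invest is a PSNE; in particular, if S ≠ V it is a non-trivial PSNE. -/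
/-!
Since `Δg` is nondecreasing, with `k` the least `m` such that `c ≤ Δg(m)`, investing is a best
response when at least `k` neighbors invest and abstaining is one when fewer do. Every member
of the `k`-core has `k` neighbors in it. A vertex outside it with `k` neighbors in it could be
added without lowering any count inside the set, contradicting maximality.
-/

theorem isPSNE_of_threshold {V : Type*} (G : SimpleGraph V) {g : ℕ → ℝ}
    (hg : Monotone (Δg g)) {c : ℝ} (hne : {m | c ≤ Δg g m}.Nonempty) (x : V → Bool)
    (hx : ∀ i, (x i = true → sInf {m | c ≤ Δg g m} ≤ nInv G x i) ∧
      (x i = false → nInv G x i < sInf {m | c ≤ Δg g m})) :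
    IsPSNE G (fun _ => g) (fun _ => c) x := fun i =>
  ⟨fun hi => (Nat.sInf_mem hne).trans (hg ((hx i).1 hi)),
   fun hi => (not_le.mp (Nat.notMem_of_lt_sInf ((hx i).2 hi) : ¬ c ≤ Δg g (nInv G x i))).le⟩

theorem ncard_adj_le_ncard_adj_of_subset {V : Type*} [Finite V] (G : SimpleGraph V)
    {S T : Set V} (hST : S ⊆ T) (i : V) :
    {j | G.Adj i j ∧ j ∈ S}.ncard ≤ {j | G.Adj i j ∧ j ∈ T}.ncard :=
  Set.ncard_le_ncard (fun _ hj => ⟨hj.1, hST hj.2⟩)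

theorem ncard_adj_lt_of_notMem_maximal {V : Type*} [Finite V] (G : SimpleGraph V) {k : ℕ}
    {S : Set V} (hdeg : ∀ i ∈ S, k ≤ {j | G.Adj i j ∧ j ∈ S}.ncard)
    (hmax : ∀ T : Set V, S ⊆ T → (∀ i ∈ T, k ≤ {j | G.Adj i j ∧ j ∈ T}.ncard) → T = S)
    {i : V} (hi : i ∉ S) : {j | G.Adj i j ∧ j ∈ S}.ncard < k := by
  by_contra! hki
  have hsub : S ⊆ insert i S := Set.subset_insert i S
  have hins : insert i S = S := by
    refine hmax _ hsub fun u hu => ?_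
    have hkS : k ≤ {j | G.Adj u j ∧ j ∈ S}.ncard := by
      rcases hu with rfl | hu
      · exact hki
      · exact hdeg u hu
    exact hkS.trans (ncard_adj_le_ncard_adj_of_subset G hsub u)
  exact hi (hins ▸ Set.mem_insert i S)

theorem nInv_eq_ncard_of_iff {V : Type*} (G : SimpleGraph V) {S : Set V} {x : V → Bool}
    (hx : ∀ i, x i = true ↔ i ∈ S) (i : V) :
    nInv G x i = {j | G.Adj i j ∧ j ∈ S}.ncard := by
  simp only [nInv, hx]

theorem stmt12_general {V : Type*} [Fintype V] (G : SimpleGraph V)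
    (g : ℕ → ℝ) (hconv : StrictMono (Δg g)) (c : ℝ)
    (hne : {m : ℕ | c ≤ Δg g m}.Nonempty)
    (k : ℕ) (hk : k = sInf {m : ℕ | c ≤ Δg g m})
    (S : Set V) (hS : S.Nonempty)
    (hdeg : ∀ i ∈ S, k ≤ {j | G.Adj i j ∧ j ∈ S}.ncard)
    (hmax : ∀ T : Set V, S ⊆ T → (∀ i ∈ T, k ≤ {j | G.Adj i j ∧ j ∈ T}.ncard) → T = S)
    (x : V → Bool) (hx : ∀ i, x i = true ↔ i ∈ S) :
    IsPSNE G (fun _ => g) (fun _ => c) x ∧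
    (S ≠ Set.univ → x ≠ (fun _ => false) ∧ x ≠ (fun _ => true)) := by
  subst hk
  refine ⟨isPSNE_of_threshold G hconv.monotone hne x fun i => ⟨fun hi => ?_, fun hi => ?_⟩,
    fun hSV => ⟨fun hx0 => ?_, fun hx1 => ?_⟩⟩
  · rw [nInv_eq_ncard_of_iff G hx]
    exact hdeg i ((hx i).mp hi)
  · rw [nInv_eq_ncard_of_iff G hx]
    exact ncard_adj_lt_of_notMem_maximal G hdeg hmax (by simp [← hx, hi])
  · obtain ⟨i, hi⟩ := hS
    simpa [hx0] using (hx i).mpr hi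
  · exact hSV (Set.eq_univ_of_forall fun i => (hx i).mp (by simp [hx1]))

/-- fully homogeneous BNPG with strictly convex `g`; suppose
`{m : c ≤ Δg(m)}` is nonempty with least element `k ≥ 1`, and `S` is a nonempty set of
vertices, maximal with respect to the property that every vertex of `S` has at least `k`
neighbors in `S` (the nonempty `k`-core).  Then the profile investing exactly on `S` is a
PSNE; in particular if `S ≠ V` it is a non-trivial PSNE. -/
theorem stmt12 {V : Type*} [Fintype V] (G : SimpleGraph V)
    (g : ℕ → ℝ) (hmono : Monotone g) (hconv : StrictMono (Δg g)) (c : ℝ)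
    (hne : {m : ℕ | c ≤ Δg g m}.Nonempty)
    (k : ℕ) (hk : k = sInf {m : ℕ | c ≤ Δg g m}) (hk1 : 1 ≤ k)
    (S : Set V) (hS : S.Nonempty)
    (hdeg : ∀ i ∈ S, k ≤ {j | G.Adj i j ∧ j ∈ S}.ncard)
    (hmax : ∀ T : Set V, S ⊆ T → (∀ i ∈ T, k ≤ {j | G.Adj i j ∧ j ∈ T}.ncard) → T = S)
    (x : V → Bool) (hx : ∀ i, x i = true ↔ i ∈ S) :
    IsPSNE G (fun _ => g) (fun _ => c) x ∧
    (S ≠ Set.univ → x ≠ (fun _ => false) ∧ x ≠ (fun _ => true)) :=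
  stmt12_general G g hconv c hne k hk S hS hdeg hmax x hx
end

section
/- Let H be a finite simple graph and consider the fully homogeneous BNPG on H with common cost c = 2 and common externality function g given by g(m) = m for m ≤ 3 and g(m) = m + 1 for m ≥ 4. Then this game has a PSNE in which at least one player invests if and only if H has a nonempty set S of vertices such that every vertex of S has exactly 3 neighbors in S (i.e., H has a nonempty 3-regular induced subgraph). -/
/-!
With these payoffs the marginal gain `Δg m` equals the cost `2` exactly when `m = 3` and is `1`
otherwise. So no player ever strictly prefers to invest, and an investing player is content
exactly when three of its neighbours invest: the PSNE are the indicator profiles of vertex sets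
in which every vertex has exactly three neighbours.
-/

section Homogeneous

variable {V : Type*} (G : SimpleGraph V)

theorem isPSNE_const_iff {g : ℕ → ℝ} {c : ℝ} (hc : ∀ m, Δg g m ≤ c) (x : V → Bool) :
    IsPSNE G (fun _ => g) (fun _ => c) x ↔ ∀ i, x i = true → c ≤ Δg g (nInv G x i) :=
  ⟨fun h i => (h i).1, fun h i => ⟨h i, fun _ => hc _⟩⟩

theorem nInv_decide_mem (S : Set V) [DecidablePred (· ∈ S)] (i : V) :
    nInv G (fun j => decide (j ∈ S)) i = {j | G.Adj i j ∧ j ∈ S}.ncard := by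
  simp only [nInv, decide_eq_true_eq]

end Homogeneous

section ThresholdThree

variable {g : ℕ → ℝ}

theorem Δg_eq_ite (hg : ∀ m, m ≤ 3 → g m = m) (hg' : ∀ m, 4 ≤ m → g m = m + 1)
    (m : ℕ) : Δg g m = if m = 3 then 2 else 1 := by
  unfold Δg
  rcases lt_trichotomy m 3 with hm | rfl | hm
  · rw [hg m hm.le, hg (m + 1) hm, if_neg hm.ne]
    push_cast
    ring
  · rw [hg 3 le_rfl, hg' 4 le_rfl, if_pos rfl]
    norm_num
  · rw [hg' m hm, hg' (m + 1) (by omega), if_neg hm.ne']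
    push_cast
    ring

theorem Δg_le_two (hg : ∀ m, m ≤ 3 → g m = m) (hg' : ∀ m, 4 ≤ m → g m = m + 1)
    (m : ℕ) : Δg g m ≤ 2 := by
  rw [Δg_eq_ite hg hg']
  split_ifs <;> norm_num

theorem two_le_Δg_iff (hg : ∀ m, m ≤ 3 → g m = m) (hg' : ∀ m, 4 ≤ m → g m = m + 1)
    {m : ℕ} : 2 ≤ Δg g m ↔ m = 3 := by
  rw [Δg_eq_ite hg hg']
  split_ifs with h <;> norm_num [h]

end ThresholdThree

theorem stmt13_general {V : Type*} (H : SimpleGraph V)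
    (g : ℕ → ℝ) (hg : ∀ m, m ≤ 3 → g m = m) (hg' : ∀ m, 4 ≤ m → g m = m + 1) :
    (∃ x : V → Bool, IsPSNE H (fun _ => g) (fun _ => (2 : ℝ)) x ∧ ∃ i, x i = true) ↔
      ∃ S : Set V, S.Nonempty ∧ ∀ i ∈ S, {j | H.Adj i j ∧ j ∈ S}.ncard = 3 := by
  simp only [isPSNE_const_iff H (Δg_le_two hg hg'), two_le_Δg_iff hg hg']
  constructor
  · rintro ⟨x, hx, i, hi⟩
    exact ⟨{j | x j = true}, ⟨i, hi⟩, hx⟩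
  · rintro ⟨S, ⟨i, hi⟩, hS⟩
    classical
    refine ⟨fun j => decide (j ∈ S), fun j hj => ?_, i, decide_eq_true hi⟩
    rw [nInv_decide_mem]
    exact hS j (of_decide_eq_true hj)

/-- the fully homogeneous BNPG on `H` with cost `c = 2` and externality
`g(m) = m` for `m ≤ 3`, `g(m) = m + 1` for `m ≥ 4`, has a PSNE in which at least one
player invests iff `H` has a nonempty set `S` of vertices each having exactly `3`
neighbors in `S` (a nonempty `3`-regular induced subgraph). -/
theorem stmt13 {V : Type*} [Fintype V] (H : SimpleGraph V)
    (g : ℕ → ℝ) (hg : ∀ m, m ≤ 3 → g m = m) (hg' : ∀ m, 4 ≤ m → g m = m + 1) :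
    (∃ x : V → Bool, IsPSNE H (fun _ => g) (fun _ => (2 : ℝ)) x ∧ ∃ i, x i = true) ↔
      ∃ S : Set V, S.Nonempty ∧ ∀ i ∈ S, {j | H.Adj i j ∧ j ∈ S}.ncard = 3 :=
  stmt13_general H g hg hg'
end

section
/- Let ε, c_A, c_B be real numbers with 0 < ε, ε ≤ c_A and ε ≤ c_B. Consider the two-player BNPG on the graph consisting of the single edge {A, B}, where player A has cost c_A and externality function g_A with g_A(0) = ε, g_A(1) = c_A, g_A(m) = 2c_A + ε for m ≥ 2, and player B has cost c_B and externality function g_B with g_B(0) = ε, g_B(1) = c_B + 2ε, g_B(m) = 2c_B + ε for m ≥ 2. Then g_A and g_B are nondecreasing and the game has no pure-strategy Nash equilibrium. -/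
lemma monotone_nat_of_le_of_forall_two_le_eq {α : Type*} [Preorder α] {f : ℕ → α} {a : α}
    (h01 : f 0 ≤ f 1) (h1 : f 1 ≤ a) (hf : ∀ m, 2 ≤ m → f m = a) : Monotone f := by
  refine monotone_nat_of_le_succ fun n => ?_
  match n with
  | 0 => exact h01
  | 1 => rwa [hf 2 le_rfl]
  | k + 2 => rw [hf (k + 2) (by omega), hf (k + 3) (by omega)]

lemma nInv_top_fin_two (x : Fin 2 → Bool) (i : Fin 2) :
    nInv (⊤ : SimpleGraph (Fin 2)) x i = (x i.rev).toNat := by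
  have hset : {j | (⊤ : SimpleGraph (Fin 2)).Adj i j ∧ x j = true}
      = {j | j = i.rev ∧ x i.rev = true} := by
    ext j
    fin_cases i <;> fin_cases j <;> simp
  rw [nInv, hset]
  cases x i.rev <;> simp

namespace IsPSNE

section

variable {V : Type*} {G : SimpleGraph V} {g : V → ℕ → ℝ} {c : V → ℝ} {x : V → Bool}

lemma eq_true_of_lt (h : IsPSNE G g c x) {i : V} (hi : c i < Δg (g i) (nInv G x i)) :
    x i = true := by
  by_contra hx
  exact (h i).2 (by simpa using hx) |>.not_gt hi

lemma eq_false_of_lt (h : IsPSNE G g c x) {i : V} (hi : Δg (g i) (nInv G x i) < c i) :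
    x i = false := by
  by_contra hx
  exact (h i).1 (by simpa using hx) |>.not_gt hi

end

section

variable {g : Fin 2 → ℕ → ℝ} {c : Fin 2 → ℝ} {x : Fin 2 → Bool}

lemma eq_rev_of_lt_of_lt (h : IsPSNE ⊤ g c x) {i : Fin 2}
    (h0 : Δg (g i) 0 < c i) (h1 : c i < Δg (g i) 1) : x i = x i.rev := by
  cases hx : x i.rev
  · exact h.eq_false_of_lt (by rwa [nInv_top_fin_two, hx])
  · exact h.eq_true_of_lt (by rwa [nInv_top_fin_two, hx])

lemma eq_not_rev_of_lt_of_lt (h : IsPSNE ⊤ g c x) {i : Fin 2}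
    (h1 : Δg (g i) 1 < c i) (h0 : c i < Δg (g i) 0) : x i = !x i.rev := by
  cases hx : x i.rev
  · exact h.eq_true_of_lt (by rwa [nInv_top_fin_two, hx])
  · exact h.eq_false_of_lt (by rwa [nInv_top_fin_two, hx])

end

end IsPSNE

/-- the two-player BNPG on the single edge `{A, B}` (the complete graph on
`Fin 2`, with `A = 0` and `B = 1`), with the indicated costs and externalities, has
nondecreasing externality functions but no PSNE. -/
theorem stmt14 (ε cA cB : ℝ) (hε : 0 < ε) (hA : ε ≤ cA) (hB : ε ≤ cB)
    (gA gB : ℕ → ℝ)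
    (hgA0 : gA 0 = ε) (hgA1 : gA 1 = cA) (hgA2 : ∀ m, 2 ≤ m → gA m = 2 * cA + ε)
    (hgB0 : gB 0 = ε) (hgB1 : gB 1 = cB + 2 * ε) (hgB2 : ∀ m, 2 ≤ m → gB m = 2 * cB + ε) :
    (Monotone gA ∧ Monotone gB) ∧
    ¬ ∃ x : Fin 2 → Bool,
        IsPSNE (⊤ : SimpleGraph (Fin 2))
          (fun i => if i = 0 then gA else gB)
          (fun i => if i = 0 then cA else cB) x := by
  refine ⟨⟨monotone_nat_of_le_of_forall_two_le_eq (by linarith) (by linarith) hgA2,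
    monotone_nat_of_le_of_forall_two_le_eq (by linarith) (by linarith) hgB2⟩, ?_⟩
  rintro ⟨x, hx⟩
  have hA_copies : x 0 = x 1 := hx.eq_rev_of_lt_of_lt (i := 0)
    (by simp only [Δg, Fin.isValue, ↓reduceIte, zero_add, hgA1, hgA0]; linarith)
    (by simp only [Δg, Fin.isValue, ↓reduceIte, Nat.reduceAdd, hgA2 2 le_rfl, hgA1]; linarith)
  have hB_flips : x 1 = !x 0 := hx.eq_not_rev_of_lt_of_lt (i := 1)
    (by simp only [Δg, Fin.isValue, one_ne_zero, ↓reduceIte, Nat.reduceAdd, hgB2 2 le_rfl, hgB1]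
        linarith)
    (by simp only [Δg, Fin.isValue, one_ne_zero, ↓reduceIte, zero_add, hgB1, hgB0]; linarith)
  rw [hA_copies] at hB_flips
  exact (Bool.eq_not_self _).1 hB_flips
end

section
/- Consider the homogeneous BNPG with three players {1, 2, 3} on the path graph with edges {1,2} and {2,3}, common externality function g with g(0) = 4.5, g(1) = 6, g(2) = 9.5 and g(m) = 10 for m ≥ 3 (so Δg(0) = 1.5, Δg(1) = 3.5, Δg(2) = 0.5), and costs c_1 = 1, c_2 = 2, c_3 = 3. Then g is nondecreasing and this game has no pure-strategy Nash equilibrium. -/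
lemma adj0 (j : Fin 3) : (SimpleGraph.pathGraph 3).Adj 0 j ↔ j = 1 := by
  rw [SimpleGraph.pathGraph_adj]; omega
lemma adj2 (j : Fin 3) : (SimpleGraph.pathGraph 3).Adj 2 j ↔ j = 1 := by
  rw [SimpleGraph.pathGraph_adj]; omega
lemma adj1 (j : Fin 3) : (SimpleGraph.pathGraph 3).Adj 1 j ↔ j = 0 ∨ j = 2 := by
  rw [SimpleGraph.pathGraph_adj]; omega

lemma n0 (x : Fin 3 → Bool) : nInv (SimpleGraph.pathGraph 3) x 0 = if x 1 then 1 else 0 := by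
  unfold nInv
  cases hx : x 1 with
  | true =>
    have : {j : Fin 3 | (SimpleGraph.pathGraph 3).Adj 0 j ∧ x j = true} = {1} := by
      ext j; simp [adj0]; intro h; subst h; exact hx
    simp [this]
  | false =>
    have : {j : Fin 3 | (SimpleGraph.pathGraph 3).Adj 0 j ∧ x j = true} = ∅ := by
      ext j; simp [adj0]; intro h; subst h; simp [hx]
    simp [this]

lemma n2 (x : Fin 3 → Bool) : nInv (SimpleGraph.pathGraph 3) x 2 = if x 1 then 1 else 0 := by
  unfold nInv
  cases hx : x 1 with
  | true =>
    have : {j : Fin 3 | (SimpleGraph.pathGraph 3).Adj 2 j ∧ x j = true} = {1} := by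
      ext j; simp [adj2]; intro h; subst h; exact hx
    simp [this]
  | false =>
    have : {j : Fin 3 | (SimpleGraph.pathGraph 3).Adj 2 j ∧ x j = true} = ∅ := by
      ext j; simp [adj2]; intro h; subst h; simp [hx]
    simp [this]

lemma n1 (x : Fin 3 → Bool) : nInv (SimpleGraph.pathGraph 3) x 1 =
    (if x 0 then 1 else 0) + (if x 2 then 1 else 0) := by
  unfold nInv
  have hset : {j : Fin 3 | (SimpleGraph.pathGraph 3).Adj 1 j ∧ x j = true}
      = {j : Fin 3 | (j = 0 ∧ x 0 = true) ∨ (j = 2 ∧ x 2 = true)} := by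
    ext j; simp only [Set.mem_setOf_eq, adj1]
    constructor
    · rintro ⟨(h | h), hx⟩ <;> subst h <;> [left; right] <;> exact ⟨rfl, hx⟩
    · rintro (⟨h, hx⟩ | ⟨h, hx⟩) <;> subst h <;> exact ⟨by simp, hx⟩
  rw [hset]
  cases h0 : x 0 <;> cases h2 : x 2
  · have : {j : Fin 3 | j = 0 ∧ x 0 = true ∨ j = 2 ∧ x 2 = true} = ∅ := by
      ext j; simp [h0, h2]
    simp [this, h0, h2]
  · have : {j : Fin 3 | j = 0 ∧ x 0 = true ∨ j = 2 ∧ x 2 = true} = {2} := by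
      ext j; simp [h0, h2]
    simp [this, h0, h2]
  · have : {j : Fin 3 | j = 0 ∧ x 0 = true ∨ j = 2 ∧ x 2 = true} = {0} := by
      ext j; simp [h0, h2]
    simp [this, h0, h2]
  · rw [show {j : Fin 3 | j = 0 ∧ true = true ∨ j = 2 ∧ true = true} = {0, 2} from by
      ext j; simp]
    rw [Set.ncard_pair (by decide)]; simp

/-- the homogeneous BNPG on the path graph on three players `0 — 1 — 2`
with `g(0) = 4.5`, `g(1) = 6`, `g(2) = 9.5`, `g(m) = 10` for `m ≥ 3`, and costs
`c 0 = 1`, `c 1 = 2`, `c 2 = 3` (players `1, 2, 3` of the paper), has a nondecreasing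
externality function but no PSNE. -/
theorem stmt15 (g : ℕ → ℝ)
    (h0 : g 0 = 4.5) (h1 : g 1 = 6) (h2 : g 2 = 9.5) (h3 : ∀ m, 3 ≤ m → g m = 10) :
    Monotone g ∧
    ¬ ∃ x : Fin 3 → Bool,
        IsPSNE (SimpleGraph.pathGraph 3) (fun _ => g)
          (fun i => ((i : ℕ) + 1 : ℝ)) x := by
  have h3' : g 3 = 10 := h3 3 le_rfl
  constructor
  · apply monotone_nat_of_le_succ
    intro n
    match n with
    | 0 => rw [h0, h1]; norm_num
    | 1 => rw [h1, h2]; norm_num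
    | 2 => rw [h2, h3']; norm_num
    | (k+3) => rw [h3 (k+3) (by omega), h3 (k+4) (by omega)]
  · rintro ⟨x, hx⟩
    have e0 := hx 0
    have e1 := hx 1
    have e2 := hx 2
    rw [n0, n1, n2] at *
    simp only [Fin.isValue] at e0 e1 e2
    cases hx0 : x 0 <;> cases hx1 : x 1 <;> cases hx2 : x 2 <;>
      simp only [hx0, hx1, hx2, if_true, if_false, Bool.false_eq_true, Bool.true_eq_false,
        forall_true_left, IsEmpty.forall_iff, true_implies, false_implies, and_true, true_and] at e0 e1 e2 <;>
      unfold Δg at e0 e1 e2 <;>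
      (revert e0 e1 e2; norm_num [h0, h1, h2, h3'])
end
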